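/- arXiv:1309.1961 — 5 statements merged into one kernel-verified Lean document; each statement's English description precedes it below -/
import Mathlib

section
/- If G is a connected bipartite graph that has no star cutset and G has a 1-join, then G is a cycle of length 4. -/
/-!
Let `(X, Y, A, B)` be a 1-join. If some `y ∈ Y` lay outside `B`, then for any `a ∈ A` the star
`{a} ∪ B` would separate `y` from the rest of `X`; so `Y = B` and symmetrically `X = A`, i.e. `G`
contains all edges between `X` and `Y`. Being bipartite, `G` is triangle-free, so `X` and `Y` are
independent and `G` is complete bipartite. A third vertex on one side would again give a star
cutset (a vertex `a` of that side together with the whole other side), so both sides have exactly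
two vertices and `G` is the 4-cycle.
-/

open SimpleGraph

universe u

variable {V : Type u}

/-- Removing the vertex set `S` from `G` leaves a disconnected (or empty) graph. -/
def RemoveDisconnects (G : SimpleGraph V) (S : Set V) : Prop :=
  ¬ (G.induce (Sᶜ)).Connected

/-- `S` is a star cutset of `G`: `S = {x} ∪ R` with `R ⊆ N(x)`, and removing `S`
disconnects `G`. -/
def IsStarCutset (G : SimpleGraph V) (S : Set V) : Prop :=
  (∃ x ∈ S, ∀ y ∈ S, y = x ∨ G.Adj x y) ∧ RemoveDisconnects G S

def NoStarCutset (G : SimpleGraph V) : Prop :=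
  ∀ S : Set V, ¬ IsStarCutset G S

/-- `G` is bipartite. -/
def Bipartite (G : SimpleGraph V) : Prop := G.Colorable 2

/-- Degree of a vertex, as the cardinality of its neighbor set. -/
noncomputable def deg (G : SimpleGraph V) (v : V) : ℕ := (G.neighborSet v).ncard

/-- A hole: an induced (chordless) cycle of length at least 4. -/
def IsHole (G : SimpleGraph V) {v : V} (c : G.Walk v v) : Prop :=
  c.IsCycle ∧ 4 ≤ c.length ∧
    ∀ a b : V, a ∈ c.support → b ∈ c.support → G.Adj a b → s(a, b) ∈ c.edges

/-- `G` is balanceable: there is a signing of the edges with `+1, -1` such that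
every hole has weight `≡ 0 (mod 4)`. -/
def Balanceable (G : SimpleGraph V) : Prop :=
  ∃ w : Sym2 V → ℤ, (∀ e ∈ G.edgeSet, w e = 1 ∨ w e = -1) ∧
    ∀ (v : V) (c : G.Walk v v), IsHole G c → ((c.edges.map w).sum) % 4 = 0

/-- `G` is balanced: every hole has length `≡ 0 (mod 4)`. -/
def BalancedGraph (G : SimpleGraph V) : Prop :=
  ∀ (v : V) (c : G.Walk v v), IsHole G c → c.length % 4 = 0

/-- `G` has no hole of length 4. -/
def FourHoleFree (G : SimpleGraph V) : Prop :=
  ∀ (v : V) (c : G.Walk v v), IsHole G c → c.length ≠ 4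

def LinearBalanceable (G : SimpleGraph V) : Prop :=
  Balanceable G ∧ FourHoleFree G

/-- `G` is 2-connected: at least 3 vertices and deleting any vertex leaves it connected. -/
def TwoConnected (G : SimpleGraph V) : Prop :=
  3 ≤ Nat.card V ∧ ∀ v : V, (G.induce ({v}ᶜ : Set V)).Connected

/-- `e` is a chord of the cycle `c`. -/
def IsChord (G : SimpleGraph V) {x : V} (c : G.Walk x x) (e : Sym2 V) : Prop :=
  e ∈ G.edgeSet ∧ e ∉ c.edges ∧ ∀ v ∈ e, v ∈ c.support

/-- `e` is the unique chord of the cycle `c`. -/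
def IsUniqueChord (G : SimpleGraph V) {x : V} (c : G.Walk x x) (e : Sym2 V) : Prop :=
  c.IsCycle ∧ IsChord G c e ∧ ∀ f, IsChord G c f → f = e

/-- A pair of twins: distinct vertices with the same neighborhood, of size at least 3. -/
def IsTwinPair (G : SimpleGraph V) (u v : V) : Prop :=
  u ≠ v ∧ G.neighborSet u = G.neighborSet v ∧ 3 ≤ (G.neighborSet u).ncard

/-- `v` is a cut vertex: two vertices distinct from `v` are connected in `G` but not
in `G - v`. -/
def IsCutVertex (G : SimpleGraph V) (v : V) : Prop :=
  ∃ (x y : V) (hx : x ∈ ({v}ᶜ : Set V)) (hy : y ∈ ({v}ᶜ : Set V)),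
    G.Reachable x y ∧ ¬ (G.induce ({v}ᶜ : Set V)).Reachable ⟨x, hx⟩ ⟨y, hy⟩

/-- The graph `R₁₀`: the 10-cycle `x₁x₂…x₁₀x₁` together with the chords `xᵢx_{i+5}`. -/
def R10 : SimpleGraph (ZMod 10) :=
  SimpleGraph.fromRel (fun i j => j = i + 1 ∨ j = i + 5)

/-- `H` is a chordless path (as a graph): some chordless Hamiltonian path carries all
of its edges. -/
def IsChordlessPathGraph {W : Type*} (H : SimpleGraph W) : Prop :=
  ∃ (u v : W) (p : H.Walk u v), p.IsPath ∧ (∀ w, w ∈ p.support) ∧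
    ∀ e ∈ H.edgeSet, e ∈ p.edges

/-- `(X₁, X₂, A₁, A₂, B₁, B₂)` is a split of a 2-join of `G`. -/
structure TwoJoinSplit (G : SimpleGraph V) (X1 X2 A1 A2 B1 B2 : Set V) : Prop where
  cover : ∀ v, v ∈ X1 ∨ v ∈ X2
  disj : Disjoint X1 X2
  A1sub : A1 ⊆ X1
  B1sub : B1 ⊆ X1
  A2sub : A2 ⊆ X2
  B2sub : B2 ⊆ X2
  A1B1disj : Disjoint A1 B1
  A2B2disj : Disjoint A2 B2
  A1ne : A1.Nonempty
  B1ne : B1.Nonempty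
  A2ne : A2.Nonempty
  B2ne : B2.Nonempty
  adjA : ∀ a1 ∈ A1, ∀ a2 ∈ A2, G.Adj a1 a2
  adjB : ∀ b1 ∈ B1, ∀ b2 ∈ B2, G.Adj b1 b2
  noOther : ∀ x1 ∈ X1, ∀ x2 ∈ X2, G.Adj x1 x2 →
    (x1 ∈ A1 ∧ x2 ∈ A2) ∨ (x1 ∈ B1 ∧ x2 ∈ B2)
  path1 : ∃ a b : X1, (a : V) ∈ A1 ∧ (b : V) ∈ B1 ∧ (G.induce X1).Reachable a b
  path2 : ∃ a b : X2, (a : V) ∈ A2 ∧ (b : V) ∈ B2 ∧ (G.induce X2).Reachable a b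
  notPath1 : A1.ncard = 1 → B1.ncard = 1 → ¬ IsChordlessPathGraph (G.induce X1)
  notPath2 : A2.ncard = 1 → B2.ncard = 1 → ¬ IsChordlessPathGraph (G.induce X2)

/-- `(X₁, X₂, A₁, …, A₆)` is a split of a 6-join of `G`. -/
structure SixJoinSplit (G : SimpleGraph V) (X1 X2 A1 A2 A3 A4 A5 A6 : Set V) : Prop where
  cover : ∀ v, v ∈ X1 ∨ v ∈ X2
  disj : Disjoint X1 X2
  sub1 : A1 ⊆ X1
  sub3 : A3 ⊆ X1
  sub5 : A5 ⊆ X1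
  sub2 : A2 ⊆ X2
  sub4 : A4 ⊆ X2
  sub6 : A6 ⊆ X2
  disj13 : Disjoint A1 A3
  disj15 : Disjoint A1 A5
  disj35 : Disjoint A3 A5
  disj24 : Disjoint A2 A4
  disj26 : Disjoint A2 A6
  disj46 : Disjoint A4 A6
  ne1 : A1.Nonempty
  ne2 : A2.Nonempty
  ne3 : A3.Nonempty
  ne4 : A4.Nonempty
  ne5 : A5.Nonempty
  ne6 : A6.Nonempty
  adj12 : ∀ a ∈ A1, ∀ b ∈ A2, G.Adj a b
  adj23 : ∀ a ∈ A2, ∀ b ∈ A3, G.Adj a b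
  adj34 : ∀ a ∈ A3, ∀ b ∈ A4, G.Adj a b
  adj45 : ∀ a ∈ A4, ∀ b ∈ A5, G.Adj a b
  adj56 : ∀ a ∈ A5, ∀ b ∈ A6, G.Adj a b
  adj61 : ∀ a ∈ A6, ∀ b ∈ A1, G.Adj a b
  noOther : ∀ x ∈ X1, ∀ y ∈ X2, G.Adj x y →
    (x ∈ A1 ∧ y ∈ A2) ∨ (x ∈ A1 ∧ y ∈ A6) ∨ (x ∈ A3 ∧ y ∈ A2) ∨
    (x ∈ A3 ∧ y ∈ A4) ∨ (x ∈ A5 ∧ y ∈ A4) ∨ (x ∈ A5 ∧ y ∈ A6)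
  card1 : 4 ≤ X1.ncard
  card2 : 4 ≤ X2.ncard

/-- `G` has a 1-join. -/
def HasOneJoin (G : SimpleGraph V) : Prop :=
  ∃ X Y A B : Set V, (∀ v, v ∈ X ∨ v ∈ Y) ∧ Disjoint X Y ∧
    X.Nontrivial ∧ Y.Nontrivial ∧
    A.Nonempty ∧ B.Nonempty ∧ A ⊆ X ∧ B ⊆ Y ∧
    (∀ a ∈ A, ∀ b ∈ B, G.Adj a b) ∧
    (∀ x ∈ X, ∀ y ∈ Y, G.Adj x y → x ∈ A ∧ y ∈ B)

variable {G : SimpleGraph V}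

theorem isStarCutset_of_isClosed {x : V} {S P : Set V} (hxS : x ∈ S)
    (hS : ∀ y ∈ S, y = x ∨ G.Adj x y) (hP : ∀ p ∈ P, ∀ q ∉ S, G.Adj p q → q ∈ P)
    {u v : V} (hu : u ∈ P \ S) (hv : v ∉ P ∪ S) : IsStarCutset G S := by
  refine ⟨⟨x, hxS, hS⟩, fun hconn => ?_⟩
  have hvS : v ∉ S := fun h => hv (Or.inr h)
  obtain ⟨w⟩ := hconn.preconnected ⟨u, hu.2⟩ ⟨v, hvS⟩
  obtain ⟨d, -, hd₁, hd₂⟩ :=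
    w.exists_boundary_dart {p : ↥Sᶜ | (p : V) ∈ P} hu.1 fun h => hv (Or.inl h)
  exact hd₂ (hP _ hd₁ _ d.snd.2 (by simpa using d.adj))

namespace NoStarCutset

theorem subset_of_oneJoin (hstar : NoStarCutset G) {X Y A B : Set V}
    (hcov : ∀ v, v ∈ X ∨ v ∈ Y) (hdisj : Disjoint X Y) (hX : X.Nontrivial) (hA : A.Nonempty)
    (hAX : A ⊆ X) (hBY : B ⊆ Y) (hAB : ∀ a ∈ A, ∀ b ∈ B, G.Adj a b)
    (honly : ∀ x ∈ X, ∀ y ∈ Y, G.Adj x y → y ∈ B) : Y ⊆ B := by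
  intro y hy
  by_contra hyB
  obtain ⟨a, ha⟩ := hA
  obtain ⟨x, hx, hxa⟩ := hX.exists_ne a
  refine hstar (insert a B) (isStarCutset_of_isClosed (P := X) (Set.mem_insert a B) ?_ ?_
    (u := x) ⟨hx, ?_⟩ (v := y) ?_)
  · rintro z (rfl | hz)
    exacts [Or.inl rfl, Or.inr (hAB a ha z hz)]
  · intro p hp q hq hpq
    exact (hcov q).resolve_right fun hqY => hq (Or.inr (honly p hp q hqY hpq))
  · rintro (rfl | hxB)
    exacts [hxa rfl, hdisj.ne_of_mem hx (hBY hxB) rfl]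
  · rintro (hyX | rfl | hyB')
    exacts [hdisj.ne_of_mem hyX hy rfl, hdisj.ne_of_mem (hAX ha) hy rfl, hyB hyB']

theorem subset_pair_of_completeBipartite (hstar : NoStarCutset G) {X Y : Set V}
    (hcov : ∀ v, v ∈ X ∨ v ∈ Y) (hdisj : Disjoint X Y) (hXY : ∀ x ∈ X, ∀ y ∈ Y, G.Adj x y)
    (hXind : ∀ p ∈ X, ∀ q ∈ X, ¬ G.Adj p q) {a b : V} (ha : a ∈ X) (hb : b ∈ X) (hab : a ≠ b) :
    X ⊆ {a, b} := by
  intro x hx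
  by_contra hxab
  simp only [Set.mem_insert_iff, Set.mem_singleton_iff, not_or] at hxab
  refine hstar (insert a Y) (isStarCutset_of_isClosed (P := {x}) (Set.mem_insert a Y) ?_ ?_
    (u := x) ⟨rfl, ?_⟩ (v := b) ?_)
  · rintro z (rfl | hz)
    exacts [Or.inl rfl, Or.inr (hXY a ha z hz)]
  · rintro p rfl q hq hpq
    exact absurd hpq (hXind p hx q ((hcov q).resolve_right fun hqY => hq (Or.inr hqY)))
  · rintro (rfl | hxY)
    exacts [hxab.1 rfl, hdisj.ne_of_mem hx hxY rfl]
  · rintro (rfl | rfl | hbY)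
    exacts [hxab.2 rfl, hab rfl, hdisj.ne_of_mem hb hbY rfl]

end NoStarCutset

theorem Bipartite.not_adj_of_adj_of_adj (hbip : Bipartite G) {p q r : V} (hpq : G.Adj p q)
    (hpr : G.Adj p r) : ¬ G.Adj q r := by
  classical
  exact fun hqr => hbip.cliqueFree (m := 3) (by norm_num) {p, q, r}
    (is3Clique_triple_iff.mpr ⟨hpq, hpr, hqr⟩)

theorem exists_spanning_four_cycle {a b c d : V} (hV : ∀ v, v = a ∨ v = b ∨ v = c ∨ v = d)
    (hab : G.Adj a b) (hbc : G.Adj b c) (hcd : G.Adj c d) (hda : G.Adj d a)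
    (hac : a ≠ c) (hbd : b ≠ d) (hnac : ¬ G.Adj a c) (hnbd : ¬ G.Adj b d) :
    ∃ (v : V) (w : G.Walk v v), w.IsCycle ∧ w.length = 4 ∧
      (∀ x : V, x ∈ w.support) ∧ (∀ e ∈ G.edgeSet, e ∈ w.edges) := by
  refine ⟨a, .cons hab (.cons hbc (.cons hcd (.cons hda .nil))), ?_, rfl, ?_, ?_⟩
  · simp [Walk.isCycle_def, Walk.isTrail_def, hab.ne, hbc.ne, hcd.ne, hda.ne,
      hab.ne.symm, hda.ne.symm, hac, hbd, hac.symm]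
  · intro x
    rcases hV x with rfl | rfl | rfl | rfl <;> simp
  · intro e he
    induction e with
    | h x y =>
      rw [mem_edgeSet] at he
      have he' := he.symm
      rcases hV x with rfl | rfl | rfl | rfl <;> rcases hV y with rfl | rfl | rfl | rfl <;>
        simp_all [Sym2.eq_swap]

theorem stmt0_general {V : Type u} (G : SimpleGraph V) (hbip : Bipartite G)
    (hstar : NoStarCutset G) (hjoin : HasOneJoin G) :
    ∃ (v : V) (c : G.Walk v v), c.IsCycle ∧ c.length = 4 ∧
      (∀ w : V, w ∈ c.support) ∧ (∀ e ∈ G.edgeSet, e ∈ c.edges) := by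
  obtain ⟨X, Y, A, B, hcov, hdisj, hX, hY, hA, hB, hAX, hBY, hAB, honly⟩ := hjoin
  have hYB : Y ⊆ B := hstar.subset_of_oneJoin hcov hdisj hX hA hAX hBY hAB
    fun x hx y hy hxy => (honly x hx y hy hxy).2
  have hXA : X ⊆ A := hstar.subset_of_oneJoin (fun v => (hcov v).symm) hdisj.symm hY hB hBY hAX
    (fun b hb a ha => (hAB a ha b hb).symm) fun y hy x hx hyx => (honly x hx y hy hyx.symm).1
  have hXY : ∀ x ∈ X, ∀ y ∈ Y, G.Adj x y := fun x hx y hy => hAB x (hXA hx) y (hYB hy)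
  obtain ⟨x₁, hx₁, x₂, hx₂, hx⟩ := hX
  obtain ⟨y₁, hy₁, y₂, hy₂, hy⟩ := hY
  have hXind : ∀ p ∈ X, ∀ q ∈ X, ¬ G.Adj p q := fun p hp q hq =>
    hbip.not_adj_of_adj_of_adj (hXY p hp y₁ hy₁).symm (hXY q hq y₁ hy₁).symm
  have hYind : ∀ p ∈ Y, ∀ q ∈ Y, ¬ G.Adj p q := fun p hp q hq =>
    hbip.not_adj_of_adj_of_adj (hXY x₁ hx₁ p hp) (hXY x₁ hx₁ q hq)
  have hXpair := hstar.subset_pair_of_completeBipartite hcov hdisj hXY hXind hx₁ hx₂ hx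
  have hYpair := hstar.subset_pair_of_completeBipartite (fun v => (hcov v).symm) hdisj.symm
    (fun y hy x hx => (hXY x hx y hy).symm) hYind hy₁ hy₂ hy
  refine exists_spanning_four_cycle (a := x₁) (b := y₁) (c := x₂) (d := y₂) (fun v => ?_)
    (hXY x₁ hx₁ y₁ hy₁) (hXY x₂ hx₂ y₁ hy₁).symm (hXY x₂ hx₂ y₂ hy₂) (hXY x₁ hx₁ y₂ hy₂).symm
    hx hy (hXind x₁ hx₁ x₂ hx₂) (hYind y₁ hy₁ y₂ hy₂)
  rcases hcov v with hv | hv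
  · obtain rfl | rfl := hXpair hv <;> simp
  · obtain rfl | rfl := hYpair hv <;> simp

/-- a connected bipartite graph with no star cutset that has a 1-join
is a cycle of length 4. -/
theorem stmt0 {V : Type u} [Fintype V] (G : SimpleGraph V)
    (hconn : G.Connected) (hbip : Bipartite G)
    (hstar : NoStarCutset G) (hjoin : HasOneJoin G) :
    ∃ (v : V) (c : G.Walk v v), c.IsCycle ∧ c.length = 4 ∧
      (∀ w : V, w ∈ c.support) ∧ (∀ e ∈ G.edgeSet, e ∈ c.edges) :=
  stmt0_general G hbip hstar hjoin
end

section
/- Let G be a graph with no star cutset and let (X₁,X₂,A₁,A₂,B₁,B₂) be a split of a 2-join of G. Then for i = 1,2: every connected component of G[Xᵢ] meets both Aᵢ and Bᵢ. -/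
open SimpleGraph

universe u

variable {V : Type u}

/-!
Let `C` be a component of `G[X₁]` missing `A₁`. Since some `A₁`-vertex reaches `B₁` inside
`G[X₁]`, some `b ∈ B₁` lies outside `C`. The star `{b} ∪ B₂` does not disconnect `G`, yet every
edge leaving `C` goes to `A₂` (impossible, as `C` misses `A₁`), to `B₂`, or to `b`; so `C` is
the whole of `G \ ({b} ∪ B₂)`, which contains `A₁`. Exchanging the roles of `A` and `B`, and of
the two sides, gives the other three cases.
-/

variable {G : SimpleGraph V}

lemma mem_of_reachable_induce_compl {S K : Set V}
    (hK : ∀ x ∈ K, ∀ y ∉ S, G.Adj x y → y ∈ K) {x y : ↥Sᶜ}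
    (hxy : (G.induce Sᶜ).Reachable x y) (hx : (x : V) ∈ K) : (y : V) ∈ K := by
  obtain ⟨p⟩ := hxy
  induction p with
  | nil => exact hx
  | @cons x z y h _ ih => exact ih (hK _ hx _ z.2 h)

-- For a 2-join, `X = X₁`, `A = A₁`, `B = B₁` and `N = B₂`.
lemma exists_reachable_mem_of_noStarCutset (hstar : NoStarCutset G) {X A B N : Set V}
    (hAB : Disjoint A B) (hXN : Disjoint X N) (hBN : ∀ b ∈ B, ∀ n ∈ N, G.Adj b n)
    (hout : ∀ x ∈ X, ∀ y ∉ X, G.Adj x y → x ∈ A ∨ y ∈ N)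
    (hpath : ∃ a b : X, (a : V) ∈ A ∧ (b : V) ∈ B ∧ (G.induce X).Reachable a b) (v : X) :
    ∃ a : X, (a : V) ∈ A ∧ (G.induce X).Reachable v a := by
  by_contra! hcon
  obtain ⟨a, b₀, ha, hb₀, hab₀⟩ := hpath
  obtain ⟨b, hb, hvb⟩ : ∃ b : X, (b : V) ∈ B ∧ ¬ (G.induce X).Reachable v b := by
    by_contra! h
    exact hcon a ha ((h b₀ hb₀).trans hab₀.symm)
  set S : Set V := insert (b : V) N
  have hS : (G.induce Sᶜ).Connected := by
    by_contra hdisc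
    refine hstar S ⟨⟨b, Set.mem_insert _ _, fun y hy => ?_⟩, hdisc⟩
    exact (Set.mem_insert_iff.mp hy).imp id (hBN b hb y)
  set K : Set V := {y | ∃ hy : y ∈ X, (G.induce X).Reachable v ⟨y, hy⟩}
  have hK : ∀ x ∈ K, ∀ y ∉ S, G.Adj x y → y ∈ K := by
    rintro x ⟨hxX, hvx⟩ y hyS hxy
    by_cases hyX : y ∈ X
    · exact ⟨hyX, hvx.trans (Adj.reachable (G := G.induce X) hxy)⟩
    · rcases hout x hxX y hyX hxy with hxA | hyN
      · exact absurd hvx (hcon ⟨x, hxX⟩ hxA)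
      · exact absurd (Set.mem_insert_of_mem _ hyN) hyS
  have hvS : (v : V) ∉ S := by
    rintro (hvb' | hvN)
    · exact hvb (Subtype.ext hvb' ▸ Reachable.refl _)
    · exact hXN.ne_of_mem v.2 hvN rfl
  have haS : (a : V) ∉ S := by
    rintro (hab | haN)
    · exact hAB.ne_of_mem ha hb hab
    · exact hXN.ne_of_mem a.2 haN rfl
  obtain ⟨_, hva⟩ := mem_of_reachable_induce_compl hK
    (hS.preconnected ⟨v, hvS⟩ ⟨a, haS⟩) ⟨v.2, Reachable.refl _⟩
  exact hcon a ha hva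

namespace TwoJoinSplit

variable {X1 X2 A1 A2 B1 B2 : Set V}

lemma symm (h : TwoJoinSplit G X1 X2 A1 A2 B1 B2) : TwoJoinSplit G X2 X1 A2 A1 B2 B1 where
  cover v := (h.cover v).symm
  disj := h.disj.symm
  A1sub := h.A2sub
  B1sub := h.B2sub
  A2sub := h.A1sub
  B2sub := h.B1sub
  A1B1disj := h.A2B2disj
  A2B2disj := h.A1B1disj
  A1ne := h.A2ne
  B1ne := h.B2ne
  A2ne := h.A1ne
  B2ne := h.B1ne
  adjA a2 h2 a1 h1 := (h.adjA a1 h1 a2 h2).symm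
  adjB b2 h2 b1 h1 := (h.adjB b1 h1 b2 h2).symm
  noOther x2 h2 x1 h1 hadj := (h.noOther x1 h1 x2 h2 hadj.symm).imp And.symm And.symm
  path1 := h.path2
  path2 := h.path1
  notPath1 := h.notPath2
  notPath2 := h.notPath1

lemma swap (h : TwoJoinSplit G X1 X2 A1 A2 B1 B2) : TwoJoinSplit G X1 X2 B1 B2 A1 A2 where
  cover := h.cover
  disj := h.disj
  A1sub := h.B1sub
  B1sub := h.A1sub
  A2sub := h.B2sub
  B2sub := h.A2sub
  A1B1disj := h.A1B1disj.symm
  A2B2disj := h.A2B2disj.symm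
  A1ne := h.B1ne
  B1ne := h.A1ne
  A2ne := h.B2ne
  B2ne := h.A2ne
  adjA := h.adjB
  adjB := h.adjA
  noOther x1 h1 x2 h2 hadj := (h.noOther x1 h1 x2 h2 hadj).symm
  path1 := by
    obtain ⟨a, b, ha, hb, hab⟩ := h.path1
    exact ⟨b, a, hb, ha, hab.symm⟩
  path2 := by
    obtain ⟨a, b, ha, hb, hab⟩ := h.path2
    exact ⟨b, a, hb, ha, hab.symm⟩
  notPath1 hB hA := h.notPath1 hA hB
  notPath2 hB hA := h.notPath2 hA hB

lemma exists_reachable_mem_A1 (h : TwoJoinSplit G X1 X2 A1 A2 B1 B2)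
    (hstar : NoStarCutset G) (v : X1) :
    ∃ a : X1, (a : V) ∈ A1 ∧ (G.induce X1).Reachable v a := by
  refine exists_reachable_mem_of_noStarCutset hstar h.A1B1disj
    (h.disj.mono_right h.B2sub) h.adjB (fun x hx y hy hxy => ?_) h.path1 v
  have hy2 : y ∈ X2 := (h.cover y).resolve_left hy
  exact (h.noOther x hx y hy2 hxy).imp And.left And.right

end TwoJoinSplit

theorem stmt1_general {V : Type u} (G : SimpleGraph V)
    (X1 X2 A1 A2 B1 B2 : Set V)
    (hsplit : TwoJoinSplit G X1 X2 A1 A2 B1 B2)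
    (hstar : NoStarCutset G) :
    (∀ v : X1, (∃ a : X1, (a : V) ∈ A1 ∧ (G.induce X1).Reachable v a) ∧
               (∃ b : X1, (b : V) ∈ B1 ∧ (G.induce X1).Reachable v b)) ∧
    (∀ v : X2, (∃ a : X2, (a : V) ∈ A2 ∧ (G.induce X2).Reachable v a) ∧
               (∃ b : X2, (b : V) ∈ B2 ∧ (G.induce X2).Reachable v b)) :=
  ⟨fun v => ⟨hsplit.exists_reachable_mem_A1 hstar v, hsplit.swap.exists_reachable_mem_A1 hstar v⟩,
    fun v => ⟨hsplit.symm.exists_reachable_mem_A1 hstar v,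
      hsplit.symm.swap.exists_reachable_mem_A1 hstar v⟩⟩

/-- with no star cutset, every connected component of `G[Xᵢ]` meets both
`Aᵢ` and `Bᵢ`. -/
theorem stmt1 {V : Type u} [Fintype V] (G : SimpleGraph V)
    (X1 X2 A1 A2 B1 B2 : Set V)
    (hsplit : TwoJoinSplit G X1 X2 A1 A2 B1 B2)
    (hstar : NoStarCutset G) :
    (∀ v : X1, (∃ a : X1, (a : V) ∈ A1 ∧ (G.induce X1).Reachable v a) ∧
               (∃ b : X1, (b : V) ∈ B1 ∧ (G.induce X1).Reachable v b)) ∧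
    (∀ v : X2, (∃ a : X2, (a : V) ∈ A2 ∧ (G.induce X2).Reachable v a) ∧
               (∃ b : X2, (b : V) ∈ B2 ∧ (G.induce X2).Reachable v b)) :=
  stmt1_general G X1 X2 A1 A2 B1 B2 hsplit hstar
end

section
/- Let G be a bipartite graph with no star cutset and let (X₁,X₂,A₁,...,A₆) be a split of a 6-join of G. Then X₁ \ (A₁ ∪ A₃ ∪ A₅) ≠ ∅ and X₂ \ (A₂ ∪ A₄ ∪ A₆) ≠ ∅. -/
open SimpleGraph

universe u

variable {V : Type u}

/-!
If `X₁ = A₁ ∪ A₃ ∪ A₅`, the vertices of `X₁` all get the colour opposite to `A₂` in a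
2-colouring, so `X₁` is stable and every vertex of `A₁` has neighbourhood `A₂ ∪ A₆`. Two
distinct `u, v ∈ A₁` would then give the star cutset `{u} ∪ N(v)`, which isolates `v`.
By the rotational symmetry of a 6-join the same holds for `A₃` and `A₅`, so `|X₁| ≤ 3`.
-/

/-- Removing `{u} ∪ N(v)`, a star centred at `u`, isolates `v`. -/
lemma isStarCutset_of_neighborSet_subset {G : SimpleGraph V} {u v z : V} (huv : u ≠ v)
    (hN : G.neighborSet v ⊆ G.neighborSet u) (hzu : z ≠ u) (hzv : z ≠ v) (hvz : ¬ G.Adj v z) :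
    IsStarCutset G (insert u (G.neighborSet v)) := by
  refine ⟨⟨u, Set.mem_insert _ _, ?_⟩, fun hconn => ?_⟩
  · rintro y (rfl | hy)
    exacts [Or.inl rfl, Or.inr (hN hy)]
  have hv : v ∈ (insert u (G.neighborSet v))ᶜ := by simp [huv.symm]
  have hz : z ∈ (insert u (G.neighborSet v))ᶜ := by simp [hzu, hvz]
  obtain ⟨w⟩ := hconn.preconnected ⟨v, hv⟩ ⟨z, hz⟩
  have hnil : ¬ w.Nil :=
    SimpleGraph.Walk.not_nil_of_ne fun h => hzv (congrArg Subtype.val h).symm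
  have hsnd := (w.snd).2
  simp only [Set.mem_compl_iff, Set.mem_insert_iff, not_or] at hsnd
  exact hsnd.2 (w.adj_snd hnil)

lemma SimpleGraph.Coloring.eq_of_adj_of_adj {G : SimpleGraph V} (c : G.Coloring (Fin 2))
    {x y w : V} (hxw : G.Adj x w) (hyw : G.Adj y w) : c x = c y := by
  have := c.valid hxw
  have := c.valid hyw
  omega

namespace SixJoinSplit

variable {G : SimpleGraph V} {X1 X2 A1 A2 A3 A4 A5 A6 : Set V}

lemma rotate (hs : SixJoinSplit G X1 X2 A1 A2 A3 A4 A5 A6) :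
    SixJoinSplit G X2 X1 A2 A3 A4 A5 A6 A1 where
  cover v := (hs.cover v).symm
  disj := hs.disj.symm
  sub1 := hs.sub2
  sub3 := hs.sub4
  sub5 := hs.sub6
  sub2 := hs.sub3
  sub4 := hs.sub5
  sub6 := hs.sub1
  disj13 := hs.disj24
  disj15 := hs.disj26
  disj35 := hs.disj46
  disj24 := hs.disj35
  disj26 := hs.disj13.symm
  disj46 := hs.disj15.symm
  ne1 := hs.ne2
  ne2 := hs.ne3
  ne3 := hs.ne4
  ne4 := hs.ne5
  ne5 := hs.ne6
  ne6 := hs.ne1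
  adj12 := hs.adj23
  adj23 := hs.adj34
  adj34 := hs.adj45
  adj45 := hs.adj56
  adj56 := hs.adj61
  adj61 := hs.adj12
  noOther x hx y hy hxy := by
    rcases hs.noOther y hy x hx hxy.symm with h | h | h | h | h | h <;>
      simp only [h, and_self, true_or, or_true]
  card1 := hs.card2
  card2 := hs.card1

lemma not_adj_of_X1_subset (hs : SixJoinSplit G X1 X2 A1 A2 A3 A4 A5 A6) (hG : Bipartite G)
    (hX1 : X1 ⊆ A1 ∪ A3 ∪ A5) : ∀ x ∈ X1, ∀ y ∈ X1, ¬ G.Adj x y := by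
  obtain ⟨c⟩ := hG
  obtain ⟨a1, ha1⟩ := hs.ne1
  obtain ⟨a2, ha2⟩ := hs.ne2
  obtain ⟨a6, ha6⟩ := hs.ne6
  have hcolor : ∀ x ∈ X1, c x = c a1 := by
    intro x hx
    rcases hX1 hx with (h | h) | h
    · exact c.eq_of_adj_of_adj (hs.adj12 x h a2 ha2) (hs.adj12 a1 ha1 a2 ha2)
    · exact c.eq_of_adj_of_adj (hs.adj23 a2 ha2 x h).symm (hs.adj12 a1 ha1 a2 ha2)
    · exact c.eq_of_adj_of_adj (hs.adj56 x h a6 ha6) (hs.adj61 a6 ha6 a1 ha1).symm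
  exact fun x hx y hy hxy => c.valid hxy ((hcolor x hx).trans (hcolor y hy).symm)

lemma neighborSet_subset_of_mem_A1 (hs : SixJoinSplit G X1 X2 A1 A2 A3 A4 A5 A6)
    (hX1 : ∀ x ∈ X1, ∀ y ∈ X1, ¬ G.Adj x y) {v : V} (hv : v ∈ A1) :
    G.neighborSet v ⊆ A2 ∪ A6 := by
  intro w hw
  rcases hs.cover w with hw1 | hw2
  · exact absurd hw (hX1 v (hs.sub1 hv) w hw1)
  have h13 := Set.disjoint_left.mp hs.disj13 hv
  have h15 := Set.disjoint_left.mp hs.disj15 hv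
  rcases hs.noOther v (hs.sub1 hv) w hw2 hw with h | h | h | h | h | h <;> tauto

lemma A1_subsingleton (hs : SixJoinSplit G X1 X2 A1 A2 A3 A4 A5 A6) (hstar : NoStarCutset G)
    (hX1 : ∀ x ∈ X1, ∀ y ∈ X1, ¬ G.Adj x y) : A1.Subsingleton := by
  intro u hu v hv
  by_contra huv
  obtain ⟨a3, ha3⟩ := hs.ne3
  have hN : G.neighborSet v ⊆ G.neighborSet u := fun w hw => by
    rcases hs.neighborSet_subset_of_mem_A1 hX1 hv hw with h | h
    exacts [hs.adj12 u hu w h, (hs.adj61 w h u hu).symm]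
  refine hstar _ (isStarCutset_of_neighborSet_subset huv hN ?_ ?_
    (hX1 v (hs.sub1 hv) a3 (hs.sub3 ha3)))
  · exact fun h => Set.disjoint_left.mp hs.disj13 hu (h ▸ ha3)
  · exact fun h => Set.disjoint_left.mp hs.disj13 hv (h ▸ ha3)

lemma nonempty_X1_diff (hs : SixJoinSplit G X1 X2 A1 A2 A3 A4 A5 A6) (hG : Bipartite G)
    (hstar : NoStarCutset G) : (X1 \ (A1 ∪ A3 ∪ A5)).Nonempty := by
  by_contra h
  have hX1 : X1 ⊆ A1 ∪ A3 ∪ A5 := Set.sdiff_eq_empty.mp (Set.not_nonempty_iff_eq_empty.mp h)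
  have hind := hs.not_adj_of_X1_subset hG hX1
  have h1 := hs.A1_subsingleton hstar hind
  have h3 := hs.rotate.rotate.A1_subsingleton hstar hind
  have h5 := hs.rotate.rotate.rotate.rotate.A1_subsingleton hstar hind
  have := hs.card1
  have : X1.ncard ≤ 3 := calc
    X1.ncard ≤ (A1 ∪ A3 ∪ A5).ncard :=
      Set.ncard_le_ncard hX1 ((h1.finite.union h3.finite).union h5.finite)
    _ ≤ A1.ncard + A3.ncard + A5.ncard := by
      grw [Set.ncard_union_le, Set.ncard_union_le]
    _ ≤ 1 + 1 + 1 := by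
      gcongr <;> exact (Set.ncard_le_one (Set.Subsingleton.finite ‹_›)).mpr ‹_›
  omega

end SixJoinSplit

theorem stmt4_general {V : Type u} (G : SimpleGraph V)
    (X1 X2 A1 A2 A3 A4 A5 A6 : Set V)
    (hbip : Bipartite G)
    (hsplit : SixJoinSplit G X1 X2 A1 A2 A3 A4 A5 A6)
    (hstar : NoStarCutset G) :
    (X1 \ (A1 ∪ A3 ∪ A5)).Nonempty ∧ (X2 \ (A2 ∪ A4 ∪ A6)).Nonempty :=
  ⟨hsplit.nonempty_X1_diff hbip hstar, hsplit.rotate.nonempty_X1_diff hbip hstar⟩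

/-- for a 6-join of a bipartite graph with no star cutset,
`X₁ \ (A₁ ∪ A₃ ∪ A₅)` and `X₂ \ (A₂ ∪ A₄ ∪ A₆)` are nonempty. -/
theorem stmt4 {V : Type u} [Fintype V] (G : SimpleGraph V)
    (X1 X2 A1 A2 A3 A4 A5 A6 : Set V)
    (hbip : Bipartite G)
    (hsplit : SixJoinSplit G X1 X2 A1 A2 A3 A4 A5 A6)
    (hstar : NoStarCutset G) :
    (X1 \ (A1 ∪ A3 ∪ A5)).Nonempty ∧ (X2 \ (A2 ∪ A4 ∪ A6)).Nonempty :=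
  stmt4_general G X1 X2 A1 A2 A3 A4 A5 A6 hbip hsplit hstar
end

section
/- Let G be a bipartite graph with no star cutset and let (X₁,X₂,A₁,...,A₆) be a split of a 6-join of G. If C is a connected component of G[X₁ \ (A₁ ∪ A₃ ∪ A₅)], then for every i ∈ {1,3,5} some vertex of Aᵢ has a neighbor in C. -/
open SimpleGraph

universe u

variable {V : Type u}

/-! If no vertex of `A₁` had a neighbour in the component `C`, every neighbour of `C` would lie
in `A₃ ∪ A₅`, since vertices of `X₁ \ (A₁ ∪ A₃ ∪ A₅)` have no neighbours in `X₂`. Any vertex of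
`A₄` is complete to `A₃ ∪ A₅`, so together with it these form a star cutset separating `C` from
`A₁`. The cases `A₃` and `A₅` are the same, with hubs in `A₆` and `A₂`. -/

theorem removeDisconnects_of_adj_mem_union {G : SimpleGraph V} {S C : Set V}
    (hC : ∀ x ∈ C, ∀ y, G.Adj x y → y ∈ C ∪ S) {u v : V}
    (hu : u ∈ C) (huS : u ∉ S) (hv : v ∉ C) (hvS : v ∉ S) :
    RemoveDisconnects G S := by
  intro hconn
  obtain ⟨p⟩ := hconn.preconnected ⟨u, huS⟩ ⟨v, hvS⟩
  obtain ⟨d, -, hfst, hsnd⟩ := p.exists_boundary_dart {x | x.1 ∈ C} hu hv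
  exact (hC _ hfst _ d.adj).elim hsnd d.snd.2

theorem isStarCutset_insert {G : SimpleGraph V} {x : V} {T : Set V}
    (hx : ∀ t ∈ T, G.Adj x t) (hT : RemoveDisconnects G (insert x T)) :
    IsStarCutset G (insert x T) :=
  ⟨⟨x, Set.mem_insert x T, fun _ hy => hy.imp id (hx _)⟩, hT⟩

theorem exists_adj_reachable_of_noStarCutset {G : SimpleGraph V}
    (hstar : NoStarCutset G) {X U B : Set V} {x b : V} (hUX : U ⊆ X) (hBU : B ⊆ U)
    (hX : ∀ w ∈ X \ U, ∀ y, G.Adj w y → y ∈ X) (hxX : x ∉ X)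
    (hx : ∀ t ∈ U \ B, G.Adj x t) (hb : b ∈ B) (v : (X \ U : Set V)) :
    ∃ a ∈ B, ∃ w : (X \ U : Set V), (G.induce (X \ U)).Reachable v w ∧ G.Adj a w := by
  by_contra! hnone
  let C : Set V := {w | ∃ hw : w ∈ X \ U, (G.induce (X \ U)).Reachable v ⟨w, hw⟩}
  have hclosed : ∀ w ∈ C, ∀ y, G.Adj w y → y ∈ C ∪ insert x (U \ B) := by
    rintro w ⟨hw, hvw⟩ y hwy
    by_cases hyU : y ∈ U
    · have hyB : y ∉ B := fun hyB => hnone y hyB ⟨w, hw⟩ hvw hwy.symm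
      exact Or.inr (Or.inr ⟨hyU, hyB⟩)
    · have hy : y ∈ X \ U := ⟨hX w hw y hwy, hyU⟩
      exact Or.inl ⟨hy, hvw.trans (Adj.reachable (G := G.induce (X \ U)) hwy)⟩
  refine hstar _ (isStarCutset_insert hx
    (removeDisconnects_of_adj_mem_union hclosed (u := v) (v := b) ⟨v.2, .rfl⟩ ?_ ?_ ?_))
  · rintro (hvx | hvUB)
    · exact hxX (hvx ▸ v.2.1)
    · exact v.2.2 hvUB.1
  · exact fun ⟨hbXU, _⟩ => hbXU.2 (hBU hb)
  · rintro (hbx | hbUB)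
    · exact hxX (hbx ▸ hUX (hBU hb))
    · exact hbUB.2 hb

namespace SixJoinSplit

variable {G : SimpleGraph V} {X1 X2 A1 A2 A3 A4 A5 A6 : Set V}

theorem mem_X1_of_adj (h : SixJoinSplit G X1 X2 A1 A2 A3 A4 A5 A6) :
    ∀ w ∈ X1 \ (A1 ∪ A3 ∪ A5), ∀ y, G.Adj w y → y ∈ X1 := by
  rintro w ⟨hw, hwA⟩ y hwy
  refine (h.cover y).resolve_right fun hy => hwA ?_
  rcases h.noOther w hw y hy hwy with ⟨h', -⟩ | ⟨h', -⟩ | ⟨h', -⟩ | ⟨h', -⟩ | ⟨h', -⟩ | ⟨h', -⟩ <;>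
    simp [h']

theorem notMem_X1_of_mem_X2 (h : SixJoinSplit G X1 X2 A1 A2 A3 A4 A5 A6) {x : V} (hx : x ∈ X2) :
    x ∉ X1 :=
  fun hx1 => Set.disjoint_left.1 h.disj hx1 hx

theorem union_subset_X1 (h : SixJoinSplit G X1 X2 A1 A2 A3 A4 A5 A6) :
    A1 ∪ A3 ∪ A5 ⊆ X1 :=
  Set.union_subset (Set.union_subset h.sub1 h.sub3) h.sub5

theorem adj_of_mem_A4 (h : SixJoinSplit G X1 X2 A1 A2 A3 A4 A5 A6) {x : V} (hx : x ∈ A4) :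
    ∀ t ∈ (A1 ∪ A3 ∪ A5) \ A1, G.Adj x t := by
  rintro t ⟨(ht | ht) | ht, ht1⟩
  · exact absurd ht ht1
  · exact (h.adj34 t ht x hx).symm
  · exact h.adj45 x hx t ht

theorem adj_of_mem_A6 (h : SixJoinSplit G X1 X2 A1 A2 A3 A4 A5 A6) {x : V} (hx : x ∈ A6) :
    ∀ t ∈ (A1 ∪ A3 ∪ A5) \ A3, G.Adj x t := by
  rintro t ⟨(ht | ht) | ht, ht3⟩
  · exact h.adj61 x hx t ht
  · exact absurd ht ht3
  · exact (h.adj56 t ht x hx).symm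

theorem adj_of_mem_A2 (h : SixJoinSplit G X1 X2 A1 A2 A3 A4 A5 A6) {x : V} (hx : x ∈ A2) :
    ∀ t ∈ (A1 ∪ A3 ∪ A5) \ A5, G.Adj x t := by
  rintro t ⟨(ht | ht) | ht, ht5⟩
  · exact (h.adj12 t ht x hx).symm
  · exact h.adj23 x hx t ht
  · exact absurd ht ht5

end SixJoinSplit

theorem stmt5_general {V : Type u} (G : SimpleGraph V)
    (X1 X2 A1 A2 A3 A4 A5 A6 : Set V)
    (hsplit : SixJoinSplit G X1 X2 A1 A2 A3 A4 A5 A6)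
    (hstar : NoStarCutset G) :
    ∀ v : (X1 \ (A1 ∪ A3 ∪ A5) : Set V),
      (∃ a ∈ A1, ∃ w : (X1 \ (A1 ∪ A3 ∪ A5) : Set V),
        (G.induce (X1 \ (A1 ∪ A3 ∪ A5))).Reachable v w ∧ G.Adj a (w : V)) ∧
      (∃ a ∈ A3, ∃ w : (X1 \ (A1 ∪ A3 ∪ A5) : Set V),
        (G.induce (X1 \ (A1 ∪ A3 ∪ A5))).Reachable v w ∧ G.Adj a (w : V)) ∧
      (∃ a ∈ A5, ∃ w : (X1 \ (A1 ∪ A3 ∪ A5) : Set V),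
        (G.induce (X1 \ (A1 ∪ A3 ∪ A5))).Reachable v w ∧ G.Adj a (w : V)) := by
  intro v
  obtain ⟨a1, ha1⟩ := hsplit.ne1
  obtain ⟨a2, ha2⟩ := hsplit.ne2
  obtain ⟨a3, ha3⟩ := hsplit.ne3
  obtain ⟨a4, ha4⟩ := hsplit.ne4
  obtain ⟨a5, ha5⟩ := hsplit.ne5
  obtain ⟨a6, ha6⟩ := hsplit.ne6
  have hUX := hsplit.union_subset_X1
  have hX := hsplit.mem_X1_of_adj
  refine ⟨?_, ?_, ?_⟩
  · exact exists_adj_reachable_of_noStarCutset hstar hUX (fun _ h => Or.inl (Or.inl h)) hX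
      (hsplit.notMem_X1_of_mem_X2 (hsplit.sub4 ha4)) (hsplit.adj_of_mem_A4 ha4) ha1 v
  · exact exists_adj_reachable_of_noStarCutset hstar hUX (fun _ h => Or.inl (Or.inr h)) hX
      (hsplit.notMem_X1_of_mem_X2 (hsplit.sub6 ha6)) (hsplit.adj_of_mem_A6 ha6) ha3 v
  · exact exists_adj_reachable_of_noStarCutset hstar hUX (fun _ h => Or.inr h) hX
      (hsplit.notMem_X1_of_mem_X2 (hsplit.sub2 ha2)) (hsplit.adj_of_mem_A2 ha2) ha5 v

/-- for a 6-join of a bipartite graph with no star cutset, every connected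
component of `G[X₁ \ (A₁ ∪ A₃ ∪ A₅)]` has a neighbor of some vertex of `Aᵢ`, for each
`i ∈ {1,3,5}`. -/
theorem stmt5 {V : Type u} [Fintype V] (G : SimpleGraph V)
    (X1 X2 A1 A2 A3 A4 A5 A6 : Set V)
    (hbip : Bipartite G)
    (hsplit : SixJoinSplit G X1 X2 A1 A2 A3 A4 A5 A6)
    (hstar : NoStarCutset G) :
    ∀ v : (X1 \ (A1 ∪ A3 ∪ A5) : Set V),
      (∃ a ∈ A1, ∃ w : (X1 \ (A1 ∪ A3 ∪ A5) : Set V),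
        (G.induce (X1 \ (A1 ∪ A3 ∪ A5))).Reachable v w ∧ G.Adj a (w : V)) ∧
      (∃ a ∈ A3, ∃ w : (X1 \ (A1 ∪ A3 ∪ A5) : Set V),
        (G.induce (X1 \ (A1 ∪ A3 ∪ A5))).Reachable v w ∧ G.Adj a (w : V)) ∧
      (∃ a ∈ A5, ∃ w : (X1 \ (A1 ∪ A3 ∪ A5) : Set V),
        (G.induce (X1 \ (A1 ∪ A3 ∪ A5))).Reachable v w ∧ G.Adj a (w : V)) :=
  stmt5_general G X1 X2 A1 A2 A3 A4 A5 A6 hsplit hstar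
end

section
/- Let G be a 4-hole-free bipartite graph with no star cutset, let (X₁,X₂,A₁,...,A₆) be a split of a 6-join of G, and let G₁ = G[X₁ ∪ {a₂,a₄,a₆}] be a block of decomposition (where aᵢ ∈ Aᵢ). Then G₁ has no star cutset. -/
open SimpleGraph

universe u

variable {V : Type u}

/-!
In a triangle-free graph without 4-holes two distinct vertices have at most one common
neighbour. Hence every `Aᵢ` of the 6-join is a single vertex, and `A₁, …, A₆` form an induced
hexagon `p₁ a₂ p₃ a₄ p₅ a₆` whose odd vertices `a₂, a₄, a₆` are the only vertices of `G₁` with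
neighbours outside `G₁`. Let `S` be a star of `G₁` with centre `x`. If `x` lies on the hexagon,
`S` meets it inside the closed neighbourhood of `x`; otherwise `x ∈ X₁` sees only the `pᵢ`, and
at most one of them. Either way the hexagon minus `S` stays connected. Every vertex of `G₁ - S`
reaches some `aᵢ` in `G₁ - S`: otherwise its component would be separated in `G - S` from the
nonempty set `X₂ \ {a₂, a₄, a₆}`, making `S` a star cutset of `G`.
-/

namespace SimpleGraph

variable {G : SimpleGraph V}

lemma CliqueFree.not_adj_of_adj_of_adj (h3 : G.CliqueFree 3) {a b c : V}
    (hab : G.Adj a b) (hbc : G.Adj b c) : ¬ G.Adj a c :=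
  fun hac => by classical exact h3 {a, b, c} (is3Clique_triple_iff.2 ⟨hab, hac, hbc⟩)

lemma FourHoleFree.eq_of_two_common_neighbors (h4 : FourHoleFree G) (h3 : G.CliqueFree 3)
    {p q y z : V} (hpy : G.Adj p y) (hqy : G.Adj q y) (hpz : G.Adj p z) (hqz : G.Adj q z)
    (hyz : y ≠ z) : p = q := by
  by_contra hpq
  have hnpq : ¬ G.Adj p q := h3.not_adj_of_adj_of_adj hpy hqy.symm
  have hnyz : ¬ G.Adj y z := h3.not_adj_of_adj_of_adj hpy.symm hpz
  let c : G.Walk p p := .cons hpy (.cons hqy.symm (.cons hqz (.cons hpz.symm .nil)))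
  have hcycle : c.IsCycle := by
    simp [c, Walk.cons_isCycle_iff, Walk.cons_isPath_iff, hpy.ne, hpz.ne, hqz.ne, hpq, hyz,
      hpy.ne.symm, hqy.ne.symm, hpz.ne.symm, Ne.symm hpq]
  refine h4 p c ⟨hcycle, by simp [c], ?_⟩ rfl
  intro a b ha hb hab
  simp only [c, Walk.support_cons, Walk.support_nil, List.mem_cons, List.not_mem_nil,
    or_false] at ha hb
  rcases ha with rfl | rfl | rfl | rfl | rfl <;> rcases hb with rfl | rfl | rfl | rfl | rfl <;>
    simp_all [c, G.adj_comm]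

lemma FourHoleFree.eq_singleton_of_forall_adj (h4 : FourHoleFree G) (h3 : G.CliqueFree 3)
    {A : Set V} {a b c : V} (ha : a ∈ A) (hbc : b ≠ c) (hb : ∀ x ∈ A, G.Adj x b)
    (hc : ∀ x ∈ A, G.Adj x c) : A = {a} :=
  Set.eq_singleton_iff_unique_mem.2 ⟨ha, fun x hx =>
    h4.eq_of_two_common_neighbors h3 (hb x hx) (hb a ha) (hc x hx) (hc a ha) hbc⟩

lemma induce_induce_connected_iff {T : Set V} {S : Set T} :
    ((G.induce T).induce S).Connected ↔ (G.induce (Subtype.val '' S)).Connected :=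
  Iso.connected_iff { toEquiv := Equiv.Set.image _ S Subtype.val_injective, map_rel_iff' := .rfl }

lemma exists_induce_reachable_adj_sdiff {W U : Set V} (hW : (G.induce W).Connected)
    (hUW : U ⊆ W) {u z : V} (hu : u ∈ U) (hz : z ∈ W \ U) :
    ∃ (m : V) (hm : m ∈ U), (∃ y ∈ W \ U, G.Adj m y) ∧
      (G.induce U).Reachable ⟨u, hu⟩ ⟨m, hm⟩ := by
  obtain ⟨p⟩ := hW.preconnected ⟨u, hUW hu⟩ ⟨z, hz.1⟩
  let R : Set W := {c | ∃ hc : c.1 ∈ U, (G.induce U).Reachable ⟨u, hu⟩ ⟨c.1, hc⟩}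
  obtain ⟨d, -, ⟨hm, hreach⟩, hd⟩ :=
    p.exists_boundary_dart R ⟨hu, .rfl⟩ (fun ⟨hzU, _⟩ => hz.2 hzU)
  refine ⟨_, hm, ⟨_, ⟨d.snd.2, fun hU => hd ⟨hU, hreach.trans ?_⟩⟩, d.adj⟩, hreach⟩
  exact (show (G.induce U).Adj ⟨_, hm⟩ ⟨_, hU⟩ from d.adj).reachable

lemma zmod_six_cases (i : ZMod 6) : i = 0 ∨ i = 1 ∨ i = 2 ∨ i = 3 ∨ i = 4 ∨ i = 5 := by
  revert i; decide

variable {v : ZMod 6 → V}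

lemma exists_hexagon_hub (hadj : ∀ i, G.Adj (v i) (v (i + 1))) {U : Set V} {j : ZMod 6}
    (hU : ∀ i, v i ∉ U → i = j ∨ (v j ∉ U ∧ (i = j + 1 ∨ j = i + 1))) :
    ∃ hm : v (j + 3) ∈ U, ∀ i (hi : v i ∈ U),
      (G.induce U).Reachable ⟨v i, hi⟩ ⟨v (j + 3), hm⟩ := by
  have far : ∀ j d : ZMod 6, (d = 2 ∨ d = 3 ∨ d = 4) →
      ¬ (j + d = j ∨ j + d = j + 1 ∨ j = j + d + 1) := by decide
  have mem (d : ZMod 6) (hd : d = 2 ∨ d = 3 ∨ d = 4) : v (j + d) ∈ U := by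
    by_contra h
    rcases hU _ h with h' | ⟨-, h'⟩ <;> exact far j d hd (by tauto)
  obtain ⟨m2, m3, m4⟩ : v (j + 2) ∈ U ∧ v (j + 3) ∈ U ∧ v (j + 4) ∈ U :=
    ⟨mem 2 (by simp), mem 3 (by simp), mem 4 (by simp)⟩
  have step (d : ZMod 6) (hd : v (j + d) ∈ U) (hd' : v (j + (d + 1)) ∈ U) :
      (G.induce U).Reachable ⟨v (j + d), hd⟩ ⟨v (j + (d + 1)), hd'⟩ :=
    Adj.reachable (by simpa [← add_assoc] using hadj (j + d))
  refine ⟨m3, fun i hi => ?_⟩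
  obtain ⟨d, rfl⟩ : ∃ d, i = j + d := ⟨i - j, by ring⟩
  rcases zmod_six_cases d with rfl | rfl | rfl | rfl | rfl | rfl
  · have m1 : v (j + 1) ∈ U := by
      by_contra h
      rcases hU _ h with h' | ⟨h', -⟩
      · exact absurd h' (by simp; decide)
      · exact h' (by simpa using hi)
    exact ((step 0 hi (by simpa using m1)).trans (step 1 m1 m2)).trans (step 2 m2 m3)
  · exact (step 1 hi m2).trans (step 2 m2 m3)
  · exact step 2 hi m3
  · rfl
  · exact (step 3 m3 hi).symm
  · exact ((step 3 m3 m4).trans (step 4 m4 hi)).symm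

section Hexagon

variable (h4 : FourHoleFree G) (h3 : G.CliqueFree 3) (hadj : ∀ i, G.Adj (v i) (v (i + 1)))
  (hne : ∀ i, v i ≠ v (i + 2))
include h4 h3 hadj hne

lemma hexagon_adj_iff {i k : ZMod 6} : G.Adj (v i) (v k) ↔ k = i + 1 ∨ i = k + 1 := by
  have adj₂ (i : ZMod 6) : G.Adj (v (i + 1)) (v (i + 2)) := by
    rw [show i + 2 = i + 1 + 1 by ring]; exact hadj (i + 1)
  have nadj₂ (i : ZMod 6) : ¬ G.Adj (v i) (v (i + 2)) := h3.not_adj_of_adj_of_adj (hadj i) (adj₂ i)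
  have nadj₃ (i : ZMod 6) : ¬ G.Adj (v i) (v (i + 3)) := fun h =>
    hne i <| h4.eq_of_two_common_neighbors h3 (hadj i) (adj₂ i).symm h
      (by rw [show i + 3 = i + 2 + 1 by ring]; exact hadj (i + 2))
      (by rw [show i + 3 = i + 1 + 2 by ring]; exact hne (i + 1))
  refine ⟨fun h => ?_, ?_⟩
  · have cases : ∀ i k : ZMod 6,
        k = i ∨ k = i + 1 ∨ k = i + 2 ∨ k = i + 3 ∨ i = k + 2 ∨ i = k + 1 := by decide
    rcases cases i k with rfl | rfl | rfl | rfl | rfl | rfl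
    · exact absurd h (G.loopless.irrefl _)
    · exact Or.inl rfl
    · exact absurd h (nadj₂ i)
    · exact absurd h (nadj₃ i)
    · exact absurd h.symm (nadj₂ k)
    · exact Or.inr rfl
  · rintro (rfl | rfl)
    exacts [hadj i, (hadj k).symm]

lemma hexagon_injective : Function.Injective v := by
  intro i k h
  have h₁ : G.Adj (v k) (v (i + 1)) := h ▸ hadj i
  have h₂ : G.Adj (v (i - 1)) (v k) := h ▸ by simpa using hadj (i - 1)
  rw [hexagon_adj_iff h4 h3 hadj hne] at h₁ h₂
  have cases : ∀ i k : ZMod 6, (i + 1 = k + 1 ∨ k = i + 1 + 1) →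
      (k = i - 1 + 1 ∨ i - 1 = k + 1) → i = k := by decide
  exact cases i k h₁ h₂

lemma exists_hexagon_center_of_star {S : Set V} {x : V} (hx : x ∈ S)
    (hS : ∀ y ∈ S, y = x ∨ G.Adj x y)
    (hodd : (∀ k, x ≠ v k) → ∀ i, ¬ G.Adj x (v (2 * i + 1))) :
    ∃ j, ∀ i, v i ∈ S → i = j ∨ (v j ∈ S ∧ (i = j + 1 ∨ j = i + 1)) := by
  by_cases hxv : ∃ j, x = v j
  · obtain ⟨j, rfl⟩ := hxv
    refine ⟨j, fun i hi => (hS _ hi).imp (fun h => hexagon_injective h4 h3 hadj hne h) ?_⟩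
    exact fun h => ⟨hx, (hexagon_adj_iff h4 h3 hadj hne).1 h⟩
  simp only [not_exists] at hxv
  have hxS (i) (hi : v i ∈ S) : G.Adj x (v i) := (hS _ hi).resolve_left (Ne.symm (hxv i))
  -- `x` sees only even vertices of the hexagon, and two of them would close a 4-hole with `x`
  have unique (i k) (hi : v i ∈ S) (hk : v k ∈ S) : i = k := by
    have even : ∀ i k : ZMod 6, (¬ ∃ m, i = 2 * m + 1) → (¬ ∃ m, k = 2 * m + 1) →
        i = k ∨ k = i + 2 ∨ i = k + 2 := by decide
    have hodd' (i) (hi : v i ∈ S) : ¬ ∃ m, i = 2 * m + 1 :=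
      fun ⟨m, hm⟩ => hodd hxv m (hm ▸ hxS i hi)
    have adj₂ (i : ZMod 6) : G.Adj (v (i + 2)) (v (i + 1)) :=
      (hexagon_adj_iff h4 h3 hadj hne).2 (Or.inr (by ring))
    rcases even i k (hodd' i hi) (hodd' k hk) with h | rfl | rfl
    · exact h
    · exact absurd (h4.eq_of_two_common_neighbors h3 (hxS i hi).symm (hxS _ hk).symm (hadj i)
        (adj₂ i) (hxv _)) (hne i)
    · exact absurd (h4.eq_of_two_common_neighbors h3 (hxS k hk).symm (hxS _ hi).symm (hadj k)
        (adj₂ k) (hxv _)) (hne k)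
  by_cases hv : ∃ j, v j ∈ S
  · obtain ⟨j, hj⟩ := hv
    exact ⟨j, fun i hi => Or.inl (unique i j hi hj)⟩
  · exact ⟨0, fun i hi => absurd ⟨i, hi⟩ hv⟩

theorem noStarCutset_induce_of_hexagon (hG : NoStarCutset G) {T : Set V} {z : V} (hz : z ∉ T)
    (hvT : ∀ i, v i ∈ T) (hbdry : ∀ u ∈ T, ∀ y ∉ T, G.Adj u y → ∃ i, u = v (2 * i + 1))
    (hodd : ∀ x ∈ T, ∀ i, G.Adj x (v (2 * i + 1)) → ∃ k, x = v k) :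
    NoStarCutset (G.induce T) := by
  rintro S ⟨⟨x, hxS, hstar⟩, hdisc⟩
  apply hdisc
  rw [induce_induce_connected_iff, Set.image_val_compl]
  set S' : Set V := Subtype.val '' S
  have hstar' : ∀ y ∈ S', y = x ∨ G.Adj x y := by
    rintro _ ⟨y, hy, rfl⟩
    exact (hstar y hy).imp (congrArg Subtype.val) id
  have hS' : (G.induce S'ᶜ).Connected :=
    not_not.1 fun h => hG S' ⟨⟨x, Set.mem_image_of_mem _ hxS, hstar'⟩, h⟩
  have hvU (i) : v i ∉ T \ S' ↔ v i ∈ S' := by simp [hvT i]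
  obtain ⟨j, hj⟩ := exists_hexagon_center_of_star h4 h3 hadj hne (Set.mem_image_of_mem _ hxS)
    hstar' fun hx i hxi => (hodd x x.2 i hxi).elim hx
  obtain ⟨hhub, hub⟩ := exists_hexagon_hub hadj (U := T \ S')
    fun i hi => (hj i ((hvU i).1 hi)).imp_right (And.imp_left (hvU j).2)
  refine (connected_iff_exists_forall_reachable _).2 ⟨⟨_, hhub⟩, fun ⟨u, hu⟩ => ?_⟩
  obtain ⟨m, hm, ⟨y, hy, hmy⟩, hum⟩ := exists_induce_reachable_adj_sdiff hS'
    (fun w hw => hw.2) hu (z := z) ⟨fun ⟨w, _, hwz⟩ => hz (hwz ▸ w.2), fun h => hz h.1⟩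
  obtain ⟨i, rfl⟩ := hbdry m hm.1 y (fun hyT => hy.2 ⟨hyT, hy.1⟩) hmy
  exact (hum.trans (hub _ hm)).symm

end Hexagon

def hexagon (v₀ v₁ v₂ v₃ v₄ v₅ : V) : ZMod 6 → V := ![v₀, v₁, v₂, v₃, v₄, v₅]

section SixJoin

variable {X1 X2 A1 A2 A3 A4 A5 A6 : Set V} {p1 a2 p3 a4 p5 a6 : V}

lemma SixJoinSplit.eq_singletons (h : SixJoinSplit G X1 X2 A1 A2 A3 A4 A5 A6)
    (h4 : FourHoleFree G) (h3 : G.CliqueFree 3) (hp1 : p1 ∈ A1) (ha2 : a2 ∈ A2)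
    (hp3 : p3 ∈ A3) (ha4 : a4 ∈ A4) (hp5 : p5 ∈ A5) (ha6 : a6 ∈ A6) :
    A1 = {p1} ∧ A2 = {a2} ∧ A3 = {p3} ∧ A4 = {a4} ∧ A5 = {p5} ∧ A6 = {a6} := by
  have ne {s t : Set V} {x y : V} (hst : Disjoint s t) (hx : x ∈ s) (hy : y ∈ t) : x ≠ y :=
    fun hxy => Set.disjoint_left.1 hst hx (hxy ▸ hy)
  refine ⟨?_, ?_, ?_, ?_, ?_, ?_⟩
  · exact h4.eq_singleton_of_forall_adj h3 hp1 (ne h.disj26 ha2 ha6)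
      (fun x hx => h.adj12 x hx a2 ha2) fun x hx => (h.adj61 a6 ha6 x hx).symm
  · exact h4.eq_singleton_of_forall_adj h3 ha2 (ne h.disj13 hp1 hp3)
      (fun x hx => (h.adj12 p1 hp1 x hx).symm) fun x hx => h.adj23 x hx p3 hp3
  · exact h4.eq_singleton_of_forall_adj h3 hp3 (ne h.disj24 ha2 ha4)
      (fun x hx => (h.adj23 a2 ha2 x hx).symm) fun x hx => h.adj34 x hx a4 ha4
  · exact h4.eq_singleton_of_forall_adj h3 ha4 (ne h.disj35 hp3 hp5)
      (fun x hx => (h.adj34 p3 hp3 x hx).symm) fun x hx => h.adj45 x hx p5 hp5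
  · exact h4.eq_singleton_of_forall_adj h3 hp5 (ne h.disj46 ha4 ha6)
      (fun x hx => (h.adj45 a4 ha4 x hx).symm) fun x hx => h.adj56 x hx a6 ha6
  · exact h4.eq_singleton_of_forall_adj h3 ha6 (ne h.disj15 hp1 hp5).symm
      (fun x hx => (h.adj56 p5 hp5 x hx).symm) fun x hx => h.adj61 x hx p1 hp1

variable (h : SixJoinSplit G X1 X2 {p1} {a2} {p3} {a4} {p5} {a6})
include h

lemma SixJoinSplit.hexagon_adj (i : ZMod 6) :
    G.Adj (hexagon p1 a2 p3 a4 p5 a6 i) (hexagon p1 a2 p3 a4 p5 a6 (i + 1)) := by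
  rcases zmod_six_cases i with rfl | rfl | rfl | rfl | rfl | rfl
  exacts [h.adj12 _ rfl _ rfl, h.adj23 _ rfl _ rfl, h.adj34 _ rfl _ rfl, h.adj45 _ rfl _ rfl,
    h.adj56 _ rfl _ rfl, h.adj61 _ rfl _ rfl]

lemma SixJoinSplit.hexagon_ne (i : ZMod 6) :
    hexagon p1 a2 p3 a4 p5 a6 i ≠ hexagon p1 a2 p3 a4 p5 a6 (i + 2) := by
  rcases zmod_six_cases i with rfl | rfl | rfl | rfl | rfl | rfl
  exacts [Set.disjoint_singleton.1 h.disj13, Set.disjoint_singleton.1 h.disj24,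
    Set.disjoint_singleton.1 h.disj35, Set.disjoint_singleton.1 h.disj46,
    (Set.disjoint_singleton.1 h.disj15).symm, (Set.disjoint_singleton.1 h.disj26).symm]

lemma SixJoinSplit.hexagon_mem (i : ZMod 6) :
    hexagon p1 a2 p3 a4 p5 a6 i ∈ X1 ∪ {a2, a4, a6} := by
  rcases zmod_six_cases i with rfl | rfl | rfl | rfl | rfl | rfl
  exacts [Or.inl (h.sub1 rfl), Or.inr (.inl rfl), Or.inl (h.sub3 rfl), Or.inr (.inr (.inl rfl)),
    Or.inl (h.sub5 rfl), Or.inr (.inr (.inr rfl))]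

lemma SixJoinSplit.exists_odd_of_adj_of_notMem :
    ∀ u ∈ X1 ∪ {a2, a4, a6}, ∀ y ∉ X1 ∪ {a2, a4, a6}, G.Adj u y →
      ∃ i, u = hexagon p1 a2 p3 a4 p5 a6 (2 * i + 1) := by
  rintro u (hu | hu) y hy huy
  · have hy2 : y ∈ X2 := (h.cover y).resolve_left fun hy1 => hy (Or.inl hy1)
    refine absurd (Or.inr ?_) hy
    rcases h.noOther u hu y hy2 huy with ⟨-, rfl⟩ | ⟨-, rfl⟩ | ⟨-, rfl⟩ | ⟨-, rfl⟩ |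
      ⟨-, rfl⟩ | ⟨-, rfl⟩ <;> simp
  · rcases hu with rfl | rfl | rfl
    exacts [⟨0, rfl⟩, ⟨1, rfl⟩, ⟨2, rfl⟩]

lemma SixJoinSplit.exists_eq_of_adj_odd :
    ∀ x ∈ X1 ∪ {a2, a4, a6}, ∀ i, G.Adj x (hexagon p1 a2 p3 a4 p5 a6 (2 * i + 1)) →
      ∃ k, x = hexagon p1 a2 p3 a4 p5 a6 k := by
  rintro x (hx | hx) i hxi
  · have hi : hexagon p1 a2 p3 a4 p5 a6 (2 * i + 1) ∈ X2 := by
      rcases zmod_six_cases i with rfl | rfl | rfl | rfl | rfl | rfl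
      exacts [h.sub2 rfl, h.sub4 rfl, h.sub6 rfl, h.sub2 rfl, h.sub4 rfl, h.sub6 rfl]
    rcases h.noOther x hx _ hi hxi with ⟨rfl, -⟩ | ⟨rfl, -⟩ | ⟨rfl, -⟩ | ⟨rfl, -⟩ |
      ⟨rfl, -⟩ | ⟨rfl, -⟩
    exacts [⟨0, rfl⟩, ⟨0, rfl⟩, ⟨2, rfl⟩, ⟨2, rfl⟩, ⟨4, rfl⟩, ⟨4, rfl⟩]
  · rcases hx with rfl | rfl | rfl
    exacts [⟨1, rfl⟩, ⟨3, rfl⟩, ⟨5, rfl⟩]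

end SixJoin

end SimpleGraph

theorem stmt7_general {V : Type u} (G : SimpleGraph V)
    (X1 X2 A1 A2 A3 A4 A5 A6 : Set V)
    (hbip : Bipartite G) (h4hf : FourHoleFree G)
    (hsplit : SixJoinSplit G X1 X2 A1 A2 A3 A4 A5 A6)
    (hstar : NoStarCutset G)
    (a2 a4 a6 : V) (ha2 : a2 ∈ A2) (ha4 : a4 ∈ A4) (ha6 : a6 ∈ A6) :
    NoStarCutset (G.induce (X1 ∪ {a2, a4, a6})) := by
  have h3 : G.CliqueFree 3 := hbip.cliqueFree (by norm_num)
  obtain ⟨p1, hp1⟩ := hsplit.ne1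
  obtain ⟨p3, hp3⟩ := hsplit.ne3
  obtain ⟨p5, hp5⟩ := hsplit.ne5
  obtain ⟨rfl, rfl, rfl, rfl, rfl, rfl⟩ :=
    hsplit.eq_singletons h4hf h3 hp1 ha2 hp3 ha4 hp5 ha6
  have hcard : ({a2, a4, a6} : Set V).ncard < X2.ncard := by
    have h₁ := Set.ncard_insert_le a2 {a4, a6}
    have h₂ := Set.ncard_insert_le a4 {a6}
    rw [Set.ncard_singleton] at h₂
    linarith [hsplit.card2]
  obtain ⟨z, hz2, hz⟩ := Set.exists_mem_notMem_of_ncard_lt_ncard hcard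
  have hzT : z ∉ X1 ∪ {a2, a4, a6} := fun hzT =>
    hzT.elim (fun hz1 => Set.disjoint_left.1 hsplit.disj hz1 hz2) hz
  exact noStarCutset_induce_of_hexagon h4hf h3 hsplit.hexagon_adj hsplit.hexagon_ne hstar hzT
    hsplit.hexagon_mem hsplit.exists_odd_of_adj_of_notMem hsplit.exists_eq_of_adj_odd

/-- for a 6-join of a 4-hole-free bipartite graph with no star cutset, the
block of decomposition `G₁ = G[X₁ ∪ {a₂, a₄, a₆}]` has no star cutset. -/
theorem stmt7 {V : Type u} [Fintype V] (G : SimpleGraph V)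
    (X1 X2 A1 A2 A3 A4 A5 A6 : Set V)
    (hbip : Bipartite G) (h4hf : FourHoleFree G)
    (hsplit : SixJoinSplit G X1 X2 A1 A2 A3 A4 A5 A6)
    (hstar : NoStarCutset G)
    (a2 a4 a6 : V) (ha2 : a2 ∈ A2) (ha4 : a4 ∈ A4) (ha6 : a6 ∈ A6) :
    NoStarCutset (G.induce (X1 ∪ {a2, a4, a6})) :=
  stmt7_general G X1 X2 A1 A2 A3 A4 A5 A6 hbip h4hf hsplit hstar a2 a4 a6 ha2 ha4 ha6
end
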